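/- For every positive integer n, det_{0≤i,j≤n-1}(C_{i+j} + C_{i+j+1}) = F_{2n}, where F_m is the m-th Fibonacci number with F_0 = F_1 = 1. -/
import Mathlib

open Finset Matrix



def bb (m k : ℕ) : ℤ := (Nat.choose (2*m) (m+k) : ℤ) - (Nat.choose (2*m) (m+k+1) : ℤ)

lemma bb_eq_zero {m k : ℕ} (h : m < k) : bb m k = 0 := by
  unfold bb
  rw [Nat.choose_eq_zero_of_lt (by omega), Nat.choose_eq_zero_of_lt (by omega)]
  simp

lemma bb_diag (m : ℕ) : bb m m = 1 := by
  unfold bb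
  have h : m + m = 2*m := by ring
  rw [h, Nat.choose_self, Nat.choose_eq_zero_of_lt (by omega)]
  simp

lemma bb_zero_right (m : ℕ) : bb m 0 = catalan m := by
  have h1 : (m + 1) * catalan m = Nat.choose (2*m) m := by
    rw [succ_mul_catalan_eq_centralBinom]; rfl
  have h2 : Nat.choose (2*m) (m+1) * (m+1) = Nat.choose (2*m) m * m := by
    rw [Nat.choose_succ_right_eq]; congr 1; omega
  have hm : ((m:ℤ) + 1) ≠ 0 := by positivity
  apply mul_left_cancel₀ hm
  unfold bb
  have h1' : ((m:ℤ) + 1) * catalan m = Nat.choose (2*m) m := by exact_mod_cast h1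
  have h2' : (Nat.choose (2*m) (m+1) : ℤ) * ((m:ℤ)+1) = (Nat.choose (2*m) m : ℤ) * m := by
    exact_mod_cast h2
  rw [h1']
  ring_nf
  ring_nf at h2'
  linarith

lemma choose_key (m a : ℕ) : Nat.choose (2*m+2) (a+2)
    = Nat.choose (2*m) a + 2 * Nat.choose (2*m) (a+1) + Nat.choose (2*m) (a+2) := by
  rw [show 2*m+2 = (2*m+1)+1 from rfl, Nat.choose_succ_succ (2*m+1) (a+1),
    Nat.choose_succ_succ (2*m) a, Nat.choose_succ_succ (2*m) (a+1)]
  ring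

lemma bb_succ (m k : ℕ) :
    bb (m+1) (k+1) = bb m k + 2 * bb m (k+1) + bb m (k+2) := by
  unfold bb
  rw [show 2*(m+1) = 2*m+2 by ring, show (m+1)+(k+1) = (m+k)+2 by ring,
    show (m+k)+2+1 = (m+k+1)+2 by ring, choose_key, choose_key,
    show m+(k+1) = m+k+1 by ring]
  simp only [show m+(k+2) = m+k+2 from by ring, show m+k+1+1 = m+k+2 from rfl,
    show m+k+1+2 = m+k+3 from rfl, show m+k+2+1 = m+k+3 from rfl]
  push_cast
  ring

lemma bb_succ_zero (m : ℕ) : bb (m+1) 0 = bb m 0 + bb m 1 := by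
  unfold bb
  rw [show 2*(m+1) = 2*m+2 by ring, show (m+1)+0 = m+1 by ring,
    show m+1+1 = m+2 from rfl, show m+2 = m+2 from rfl]
  rw [show 2*m+2 = (2*m+1)+1 from rfl, Nat.choose_succ_succ (2*m+1) m,
    ← Nat.choose_symm_half, Nat.choose_succ_succ (2*m) m]
  rw [show (2*m+1)+1 = 2*m+2 from rfl, choose_key]
  simp only [show m+0 = m from by ring]
  push_cast
  ring



lemma sum_shrink {i N M : ℕ} (hN : i + 1 ≤ N) (hM : i + 1 ≤ M) (g : ℕ → ℤ) :
    ∑ k ∈ range N, bb i k * g k = ∑ k ∈ range M, bb i k * g k := by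
  have key : ∀ L, i + 1 ≤ L → ∑ k ∈ range L, bb i k * g k = ∑ k ∈ range (i+1), bb i k * g k := by
    intro L hL
    refine (Finset.sum_subset (Finset.range_subset_range.2 hL) fun x _ hx => ?_).symm
    rw [bb_eq_zero (by simpa using hx), zero_mul]
  rw [key N hN, key M hM]

lemma shift_sum (i j M' : ℕ) (hi : i + 1 ≤ M' + 1) :
    ∑ k ∈ range (M'+1), bb i (k+1) * bb j k
      = ∑ k ∈ range (M'+1), bb i (k+2) * bb j (k+1) + bb i 1 * bb j 0 := by
  rw [Finset.sum_range_succ']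
  congr 1
  rw [Finset.sum_range_succ, bb_eq_zero (show i < M'+2 by omega), zero_mul, add_zero]

lemma half (i j M : ℕ) (hi : i + 1 ≤ M) :
    ∑ k ∈ range (M+1), bb (i+1) k * bb j k
      = bb i 0 * bb j 0 + ((∑ k ∈ range M, bb i k * bb j (k+1))
        + 2 * (∑ k ∈ range M, bb i (k+1) * bb j (k+1))
        + ∑ k ∈ range M, bb i (k+1) * bb j k) := by
  obtain ⟨M', rfl⟩ : ∃ M', M = M' + 1 := ⟨M - 1, by omega⟩
  rw [Finset.sum_range_succ']
  have h0 : ∀ k ∈ range (M'+1), bb (i+1) (k+1) * bb j (k+1)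
      = bb i k * bb j (k+1) + 2 * (bb i (k+1) * bb j (k+1)) + bb i (k+2) * bb j (k+1) := by
    intro k _; rw [bb_succ]; ring
  rw [Finset.sum_congr rfl h0, Finset.sum_add_distrib, Finset.sum_add_distrib,
    ← Finset.mul_sum, bb_succ_zero, shift_sum i j M' hi]
  ring

lemma transfer (i j M : ℕ) (hi : i + 1 ≤ M) (hj : j + 1 ≤ M) :
    ∑ k ∈ range (M+1), bb (i+1) k * bb j k = ∑ k ∈ range (M+1), bb i k * bb (j+1) k := by
  have h2 : ∑ k ∈ range (M+1), bb i k * bb (j+1) k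
      = ∑ k ∈ range (M+1), bb (j+1) k * bb i k := by
    exact Finset.sum_congr rfl fun k _ => mul_comm _ _
  rw [half i j M hi, h2, half j i M hj]
  have c1 : ∑ k ∈ range M, bb j k * bb i (k+1) = ∑ k ∈ range M, bb i (k+1) * bb j k :=
    Finset.sum_congr rfl fun k _ => mul_comm _ _
  have c2 : ∑ k ∈ range M, bb j (k+1) * bb i (k+1) = ∑ k ∈ range M, bb i (k+1) * bb j (k+1) :=
    Finset.sum_congr rfl fun k _ => mul_comm _ _
  have c3 : ∑ k ∈ range M, bb j (k+1) * bb i k = ∑ k ∈ range M, bb i k * bb j (k+1) :=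
    Finset.sum_congr rfl fun k _ => mul_comm _ _
  rw [c1, c2, c3]
  ring

lemma keyS : ∀ i j : ℕ, ∑ k ∈ range (i+j+2), bb i k * bb j k = catalan (i+j) := by
  intro i
  induction i with
  | zero =>
    intro j
    rw [Finset.sum_eq_single_of_mem 0 (by simp)]
    · rw [bb_diag 0, bb_zero_right, one_mul]; norm_num
    · intro k _ hk
      rw [bb_eq_zero (by omega), zero_mul]
  | succ i ih =>
    intro j
    have hM : i + 1 + j + 2 = (i + j + 2) + 1 := by ring
    rw [hM, transfer i j (i+j+2) (by omega) (by omega)]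
    have : ∑ k ∈ range (i+j+2+1), bb i k * bb (j+1) k
        = ∑ k ∈ range (i+(j+1)+2), bb i k * bb (j+1) k :=
      sum_shrink (by omega) (by omega) _
    rw [this, ih (j+1), show i+(j+1) = i+1+j from by omega]


def uu (m k l : ℕ) : ℤ :=
  if k = l then (if k + 1 = m then 2 else 3) else if k+1 = l ∨ l+1 = k then 1 else 0

def UU (m : ℕ) : Matrix (Fin m) (Fin m) ℤ := Matrix.of fun k l => uu m k.1 l.1

lemma succAbove_one_val (m : ℕ) (x : Fin (m+2)) :
    (((Fin.succ (0 : Fin (m+2))).succAbove x) : ℕ) = if x.1 = 0 then 0 else x.1 + 1 := by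
  rcases x with ⟨x, hx⟩
  unfold Fin.succAbove
  split_ifs with h1 h2 h2 <;> simp_all [Fin.lt_def]

lemma uu_eq_one {m k l : ℕ} (h : k+1 = l ∨ l+1 = k) : uu m k l = 1 := by
  unfold uu; rw [if_neg (by omega), if_pos h]

lemma uu_eq_zero {m k l : ℕ} (h1 : k ≠ l) (h2 : ¬(k+1 = l ∨ l+1 = k)) : uu m k l = 0 := by
  unfold uu; rw [if_neg h1, if_neg h2]

lemma uu_eq_three {m k l : ℕ} (h : k = l) (h2 : k+1 ≠ m) : uu m k l = 3 := by
  unfold uu; rw [if_pos h, if_neg h2]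

lemma uu_shift2 (m k l : ℕ) : uu (m+2) (k+2) (l+2) = uu m k l := by
  unfold uu; split_ifs <;> omega

lemma minorA (m : ℕ) :
    (UU (m+3)).submatrix Fin.succ ((0 : Fin (m+3)).succAbove) = UU (m+2) := by
  ext k l
  rw [Fin.succAbove_zero]
  show uu (m+3) (k.1+1) (l.1+1) = uu (m+2) k.1 l.1
  unfold uu; split_ifs <;> omega

lemma minorB (m : ℕ) :
    Matrix.det ((UU (m+3)).submatrix Fin.succ (Fin.succ (0 : Fin (m+2))).succAbove)
      = Matrix.det (UU (m+1)) := by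
  rw [Matrix.det_succ_column_zero, Fin.sum_univ_succ]
  have hB0 : ((UU (m+3)).submatrix Fin.succ (Fin.succ (0 : Fin (m+2))).succAbove) 0 0 = 1 := by
    show uu (m+3) ((0 : Fin (m+2)).1+1) (((Fin.succ (0 : Fin (m+2))).succAbove 0) : ℕ) = 1
    rw [succAbove_one_val]
    simp only [Fin.val_zero, eq_self_iff_true, if_true, ite_true]
    exact uu_eq_one (Or.inr rfl)
  have htail : ∑ k : Fin (m+1),
      (-1:ℤ)^((Fin.succ k : Fin (m+2)) : ℕ) *
        ((UU (m+3)).submatrix Fin.succ (Fin.succ (0 : Fin (m+2))).succAbove) (Fin.succ k) 0 *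
        Matrix.det (((UU (m+3)).submatrix Fin.succ
          (Fin.succ (0 : Fin (m+2))).succAbove).submatrix (Fin.succ k).succAbove Fin.succ) = 0 := by
    refine Finset.sum_eq_zero fun k _ => ?_
    have hz : ((UU (m+3)).submatrix Fin.succ (Fin.succ (0 : Fin (m+2))).succAbove)
        (Fin.succ k) 0 = 0 := by
      show uu (m+3) ((Fin.succ k : Fin (m+2)).1+1)
        (((Fin.succ (0 : Fin (m+2))).succAbove 0) : ℕ) = 0
      rw [succAbove_one_val]
      simp only [Fin.val_zero, Fin.val_succ, eq_self_iff_true, if_true, ite_true]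
      exact uu_eq_zero (by omega) (by omega)
    rw [hz]; ring
  rw [htail, add_zero, hB0]
  have hsub : ((UU (m+3)).submatrix Fin.succ
      (Fin.succ (0 : Fin (m+2))).succAbove).submatrix
        (Fin.succAbove (0 : Fin (m+2))) Fin.succ = UU (m+1) := by
    ext k l
    rw [Fin.succAbove_zero]
    show uu (m+3) ((Fin.succ k : Fin (m+2)).1+1)
      (((Fin.succ (0 : Fin (m+2))).succAbove (Fin.succ l)) : ℕ) = uu (m+1) k.1 l.1
    rw [succAbove_one_val]
    simp only [Fin.val_succ, if_neg (Nat.succ_ne_zero _)]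
    rw [show m+3 = (m+1)+2 from rfl, show k.1+1+1 = k.1+2 from rfl,
      show l.1+1+1 = l.1+2 from rfl, uu_shift2]
  rw [hsub]
  simp

lemma fib_key (a : ℕ) : Nat.fib (a+4) + Nat.fib a = 3 * Nat.fib (a+2) := by
  simp [Nat.fib_add_two]; ring

lemma detUU : ∀ m : ℕ, (UU (m+1)).det = (Nat.fib (2*m+3) : ℤ) := by
  intro m
  induction m using Nat.twoStepInduction with
  | zero =>
    rw [show (0:ℕ)+1 = 1 from rfl, Matrix.det_fin_one]
    show uu 1 0 0 = ((Nat.fib 3 : ℕ) : ℤ)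
    decide
  | one =>
    rw [show (1:ℕ)+1 = 2 from rfl, Matrix.det_fin_two]
    show uu 2 0 0 * uu 2 1 1 - uu 2 0 1 * uu 2 1 0 = ((Nat.fib 5 : ℕ) : ℤ)
    decide
  | more m ih1 ih2 =>
    rw [Matrix.det_succ_row_zero, Fin.sum_univ_succ, Fin.sum_univ_succ]
    have h00 : UU (m+3) 0 0 = 3 := by
      show uu (m+3) ((0 : Fin (m+3)).1) ((0 : Fin (m+3)).1) = 3
      simp only [Fin.val_zero]
      exact uu_eq_three rfl (by omega)
    have h01 : UU (m+3) 0 (Fin.succ 0) = 1 := by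
      show uu (m+3) ((0 : Fin (m+3)).1) ((Fin.succ (0 : Fin (m+2))).1) = 1
      simp only [Fin.val_zero, Fin.val_succ]
      exact uu_eq_one (Or.inl rfl)
    have htail : ∑ j : Fin (m+1),
        (-1:ℤ)^((Fin.succ (Fin.succ j) : Fin (m+3)) : ℕ) * UU (m+3) 0 (Fin.succ (Fin.succ j)) *
          Matrix.det ((UU (m+3)).submatrix Fin.succ (Fin.succ (Fin.succ j)).succAbove) = 0 := by
      refine Finset.sum_eq_zero fun j _ => ?_
      have hz : UU (m+3) 0 (Fin.succ (Fin.succ j)) = 0 := by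
        show uu (m+3) ((0 : Fin (m+3)).1) ((Fin.succ (Fin.succ j) : Fin (m+3)).1) = 0
        simp only [Fin.val_zero, Fin.val_succ]
        exact uu_eq_zero (by omega) (by omega)
      rw [hz]; ring
    rw [htail, add_zero, h00, h01, minorA, minorB, ih1, ih2]
    simp only [Fin.val_zero, Fin.val_succ, pow_zero, pow_one, one_mul, neg_one_mul]
    have hk := fib_key (2*m+3)
    have h1 : 2*m+3+4 = 2*(m+2)+3 := by ring
    have h2 : 2*m+3+2 = 2*(m+1)+3 := by ring
    rw [h1, h2] at hk
    have hk' : (Nat.fib (2*(m+2)+3) : ℤ) + (Nat.fib (2*m+3) : ℤ) = 3 * (Nat.fib (2*(m+1)+3) : ℤ) := by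
      exact_mod_cast hk
    norm_num
    linarith


def tt (k l : ℕ) : ℤ :=
  if k = l then (if k = 0 then 2 else 3) else if k+1 = l ∨ l+1 = k then 1 else 0
def TT (n : ℕ) : Matrix (Fin n) (Fin n) ℤ := Matrix.of fun k l => tt k.1 l.1


lemma detTT (m : ℕ) : (TT (m+1)).det = (Nat.fib (2*m+3) : ℤ) := by
  have h : (TT (m+1)).submatrix (Fin.revPerm) (Fin.revPerm) = UU (m+1) := by
    ext k l
    show tt (Fin.rev k).1 (Fin.rev l).1 = uu (m+1) k.1 l.1
    simp only [Fin.val_rev]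
    have hk := k.isLt; have hl := l.isLt
    unfold tt uu; split_ifs <;> omega
  rw [← Matrix.det_submatrix_equiv_self Fin.revPerm (TT (m+1)), h, detUU]

lemma sum_tt {N k : ℕ} (hk : k + 2 ≤ N) (f : ℕ → ℤ) :
    ∑ l ∈ range N, tt k l * f l
      = if k = 0 then 2 * f 0 + f 1 else f (k-1) + 3 * f k + f (k+1) := by
  rcases k with _ | c
  · rw [if_pos rfl]
    have hs : ({0, 1} : Finset ℕ) ⊆ range N := by
      intro x hx; simp at hx; simp; omega
    rw [← Finset.sum_subset hs (fun x hx hnx => ?_)]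
    · rw [Finset.sum_pair (by norm_num)]
      have t0 : tt 0 0 = 2 := by unfold tt; norm_num
      have t1 : tt 0 1 = 1 := by unfold tt; norm_num
      rw [t0, t1]; ring
    · have hx1 : x ≠ 0 ∧ x ≠ 1 := by simpa using hnx
      have : tt 0 x = 0 := by unfold tt; rw [if_neg (by omega), if_neg (by omega)]
      rw [this, zero_mul]
  · rw [if_neg (by omega)]
    have hs : ({c, c+1, c+2} : Finset ℕ) ⊆ range N := by
      intro x hx; simp at hx; simp; omega
    rw [← Finset.sum_subset hs (fun x hx hnx => ?_)]
    · rw [show ({c, c+1, c+2} : Finset ℕ) = insert c (insert (c+1) {c+2}) from rfl,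
        Finset.sum_insert (by simp), Finset.sum_insert (by simp),
        Finset.sum_singleton]
      have t0 : tt (c+1) c = 1 := by unfold tt; split_ifs <;> omega
      have t1 : tt (c+1) (c+1) = 3 := by unfold tt; rw [if_pos rfl, if_neg (by omega)]
      have t2 : tt (c+1) (c+2) = 1 := by unfold tt; split_ifs <;> omega
      rw [t0, t1, t2, show c+1-1 = c from rfl]; ring
    · have hx1 : x ≠ c ∧ x ≠ c+1 ∧ x ≠ c+2 := by simpa using hnx
      have : tt (c+1) x = 0 := by unfold tt; rw [if_neg (by omega), if_neg (by omega)]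
      rw [this, zero_mul]


def LL (n : ℕ) : Matrix (Fin n) (Fin n) ℤ := Matrix.of fun i k => bb i.1 k.1


lemma det_LL (n : ℕ) : (LL n).det = 1 := by
  have h : (LL n).BlockTriangular OrderDual.toDual := by
    intro i j hij
    exact bb_eq_zero (by exact hij)
  rw [Matrix.det_of_lowerTriangular _ h]
  have : ∀ i : Fin n, LL n i i = 1 := fun i => bb_diag i.1
  simp [this]

lemma hTL (n : ℕ) (k j : Fin n) :
    ∑ l : Fin n, TT n k l * (LL n)ᵀ l j = bb j.1 k.1 + bb (j.1+1) k.1 := by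
  have e1 : ∑ l : Fin n, TT n k l * (LL n)ᵀ l j
      = ∑ l ∈ range n, tt k.1 l * bb j.1 l := by
    rw [← Fin.sum_univ_eq_sum_range (fun l => tt k.1 l * bb j.1 l) n]
    rfl
  have e2 : ∑ l ∈ range n, tt k.1 l * bb j.1 l
      = ∑ l ∈ range (n+2), tt k.1 l * bb j.1 l := by
    refine Finset.sum_subset (Finset.range_subset_range.2 (by omega)) fun x _ hx => ?_
    rw [bb_eq_zero (by simp at hx ⊢; omega), mul_zero]
  rw [e1, e2, sum_tt (by have := k.isLt; omega)]
  rcases hk : k.1 with _ | c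
  · rw [if_pos rfl, bb_succ_zero]; ring
  · rw [if_neg (by omega), bb_succ j.1 c, show c+1-1 = c from rfl]; ring

lemma cshd_fact (n : ℕ) :
    (Matrix.of fun i j : Fin n =>
      (catalan (i.1 + j.1) : ℤ) + (catalan (i.1 + j.1 + 1) : ℤ))
      = LL n * (TT n * (LL n)ᵀ) := by
  ext i j
  rw [Matrix.mul_apply]
  have e1 : ∀ k : Fin n, LL n i k * (TT n * (LL n)ᵀ) k j
      = bb i.1 k.1 * (bb j.1 k.1 + bb (j.1+1) k.1) := by
    intro k
    rw [Matrix.mul_apply, hTL n k j]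
    rfl
  rw [Finset.sum_congr rfl (fun k _ => e1 k)]
  have e2 : ∑ k : Fin n, bb i.1 k.1 * (bb j.1 k.1 + bb (j.1+1) k.1)
      = ∑ k ∈ range n, bb i.1 k * (bb j.1 k + bb (j.1+1) k) :=
    Fin.sum_univ_eq_sum_range (fun k => bb i.1 k * (bb j.1 k + bb (j.1+1) k)) n
  rw [e2]
  have e3 : ∑ k ∈ range n, bb i.1 k * (bb j.1 k + bb (j.1+1) k)
      = ∑ k ∈ range n, bb i.1 k * bb j.1 k + ∑ k ∈ range n, bb i.1 k * bb (j.1+1) k := by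
    rw [← Finset.sum_add_distrib]
    exact Finset.sum_congr rfl fun k _ => by ring
  rw [e3, sum_shrink (by have := i.isLt; omega) (by omega : i.1+1 ≤ i.1+j.1+2) (fun k => bb j.1 k),
    sum_shrink (by have := i.isLt; omega) (by omega : i.1+1 ≤ i.1+(j.1+1)+2) (fun k => bb (j.1+1) k),
    keyS i.1 j.1, keyS i.1 (j.1+1)]
  show ((catalan (i.1+j.1) : ℤ) + (catalan (i.1+j.1+1) : ℤ)) = _
  rw [show i.1+(j.1+1) = i.1+j.1+1 from by omega]

theorem catalan_sum_hankel_det_fib (n : ℕ) (hn : 0 < n) :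
    Matrix.det (Matrix.of fun i j : Fin n =>
      (catalan (i.1 + j.1) : ℤ) + (catalan (i.1 + j.1 + 1) : ℤ)) = Nat.fib (2 * n + 1) := by
  obtain ⟨m, rfl⟩ : ∃ m, n = m + 1 := ⟨n - 1, by omega⟩
  rw [cshd_fact, Matrix.det_mul, Matrix.det_mul, Matrix.det_transpose, det_LL, detTT,
    show 2*(m+1)+1 = 2*m+3 from by ring]
  ring
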